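/- arXiv:2009.14511 — 5 statements merged into one kernel-verified Lean document; each statement's English description precedes it below -/
import Mathlib

section
/- Let f(z) = az + b and g(z) = cz + d be affine maps with 0 < c < 1 < a and b/(1-a) < d/(1-c). Then the closure (in the topology of locally uniform convergence, equivalently in the parameters) of the semigroup generated by f and g contains every translation z ↦ z + t for t ≥ d/(1-c) - b/(1-a). -/
set_option maxHeartbeats 1000000

/-- Near-one products `c^m * a^n` with `m` arbitrarily large. -/
lemma aux_lemU (a c : ℝ) (hc : 0 < c) (hc1 : c < 1) (ha : 1 < a)
    (M : ℕ) (hM : 1 ≤ M) (ε : ℝ) (hε : 0 < ε) :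
    ∃ m n : ℕ, M ≤ m ∧ |c ^ m * a ^ n - 1| < ε := by
  have hL : 0 < -Real.log c := by
    have := Real.log_neg hc hc1; linarith
  have hA : 0 < Real.log a := Real.log_pos ha
  set L : ℝ := -Real.log c with hLdef
  set A : ℝ := Real.log a with hAdef
  set θ : ℝ := A / L with hθdef
  have hθ : 0 < θ := div_pos hA hL
  obtain ⟨η, hη, hexp⟩ : ∃ η > 0, ∀ x : ℝ, |x| < η → |Real.exp x - 1| < ε := by
    have h := Real.continuous_exp.continuousAt (x := 0)
    rw [Metric.continuousAt_iff] at h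
    obtain ⟨δ', hδ', hh⟩ := h ε hε
    refine ⟨δ', hδ', fun x hx => ?_⟩
    have := hh (x := x) (by simpa [Real.dist_eq] using hx)
    simpa [Real.dist_eq, Real.exp_zero] using this
  obtain ⟨nn, hnn⟩ := exists_nat_gt (max (1 / θ) (M * L / η))
  have hnn1 : (1:ℝ)/θ < nn := lt_of_le_of_lt (le_max_left _ _) hnn
  have hnn2 : (M:ℝ) * L / η < nn := lt_of_le_of_lt (le_max_right _ _) hnn
  have hnnR : (0:ℝ) < nn := lt_trans (one_div_pos.mpr hθ) hnn1
  have hnnpos : 0 < nn := by exact_mod_cast hnnR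
  obtain ⟨j, k, hk0, hkn, hjk⟩ := Real.exists_int_int_abs_mul_sub_le θ hnnpos
  have hjk' : |(k:ℝ) * θ - j| ≤ 1 / nn := by
    refine le_trans hjk ?_
    apply div_le_div_of_nonneg_left one_pos.le hnnR
    linarith
  have hkR : (1:ℝ) ≤ k := by exact_mod_cast hk0
  have h1nnθ : 1 / (nn:ℝ) < θ := by
    rw [div_lt_iff₀ hnnR]
    rw [div_lt_iff₀ hθ] at hnn1
    nlinarith
  have hjpos : 0 < j := by
    have h1 : (k:ℝ) * θ - j ≤ 1 / nn := (abs_le.mp hjk').2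
    have h2 : θ ≤ (k:ℝ) * θ := le_mul_of_one_le_left hθ.le hkR
    have : (0:ℝ) < j := by linarith
    exact_mod_cast this
  refine ⟨M * j.toNat, M * k.toNat, Nat.le_mul_of_pos_right M (by omega), ?_⟩
  have hjt : ((j.toNat : ℕ) : ℝ) = (j:ℝ) := by
    exact_mod_cast congrArg (Int.cast : ℤ → ℝ) (Int.toNat_of_nonneg hjpos.le)
  have hkt : ((k.toNat : ℕ) : ℝ) = (k:ℝ) := by
    exact_mod_cast congrArg (Int.cast : ℤ → ℝ) (Int.toNat_of_nonneg hk0.le)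
  have hcm : c ^ (M * j.toNat) = Real.exp (((M * j.toNat : ℕ):ℝ) * Real.log c) := by
    rw [Real.exp_nat_mul, Real.exp_log hc]
  have han : a ^ (M * k.toNat) = Real.exp (((M * k.toNat : ℕ):ℝ) * Real.log a) := by
    rw [Real.exp_nat_mul, Real.exp_log (by linarith : (0:ℝ) < a)]
  rw [hcm, han, ← Real.exp_add]
  apply hexp
  have hlogc : Real.log c = -L := by rw [hLdef]; ring
  have hAθ : A = θ * L := by rw [hθdef]; field_simp
  have hxval : ((M * j.toNat : ℕ):ℝ) * Real.log c + ((M * k.toNat : ℕ):ℝ) * Real.log a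
      = (M:ℝ) * L * ((k:ℝ) * θ - j) := by
    rw [hlogc, ← hAdef, hAθ]
    push_cast [hjt, hkt]
    ring
  rw [hxval]
  have hMpos : (0:ℝ) < M := by exact_mod_cast hM
  have hML : 0 < (M:ℝ) * L := mul_pos hMpos hL
  rw [abs_mul, abs_of_pos hML]
  calc (M:ℝ) * L * |(k:ℝ) * θ - j| ≤ (M:ℝ) * L * (1/nn) := by
        exact mul_le_mul_of_nonneg_left hjk' hML.le
    _ < η := by
        rw [div_lt_iff₀ hη] at hnn2
        rw [mul_one_div, div_lt_iff₀ hnnR]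
        nlinarith

/-- For `f(z) = az + b`, `g(z) = cz + d` with `0 < c < 1 < a` and
`b/(1-a) < d/(1-c)`, the closure (in the parameters, equivalently locally uniform
convergence) of the semigroup generated by `f` and `g` contains every translation
`z ↦ z + t` with `t ≥ d/(1-c) - b/(1-a)`. -/
theorem closure_of_semigroup_contains_translations
    (a b c d : ℝ) (hc : 0 < c) (hc1 : c < 1) (ha : 1 < a)
    (hfix : b / (1 - a) < d / (1 - c))
    (f g : Function.End ℝ)
    (hf : ∀ z, f z = a * z + b) (hg : ∀ z, g z = c * z + d) :
    ∀ t : ℝ, d / (1 - c) - b / (1 - a) ≤ t → ∀ ε > (0 : ℝ),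
      ∃ h ∈ Subsemigroup.closure ({f, g} : Set (Function.End ℝ)),
        ∃ lam kap : ℝ, (∀ z, h z = lam * z + kap) ∧ |lam - 1| < ε ∧ |kap - t| < ε := by
  intro t ht ε hε
  set C := Subsemigroup.closure ({f, g} : Set (Function.End ℝ)) with hCdef
  obtain ⟨p, hp⟩ : ∃ x : ℝ, x = b / (1 - a) := ⟨_, rfl⟩
  obtain ⟨q, hq⟩ : ∃ x : ℝ, x = d / (1 - c) := ⟨_, rfl⟩
  obtain ⟨δ, hδdef⟩ : ∃ x : ℝ, x = q - p := ⟨_, rfl⟩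
  rw [← hp, ← hq] at ht hfix
  rw [← hδdef] at ht
  have hδ : 0 < δ := by rw [hδdef]; linarith only [hfix]
  have ha0 : 0 < a := lt_trans one_pos ha
  have h1a : 1 - a ≠ 0 := by intro h; nlinarith
  have h1c : 1 - c ≠ 0 := by intro h; nlinarith
  have hb : b = p * (1 - a) := by rw [hp]; field_simp
  have hd : d = q * (1 - c) := by rw [hq]; field_simp
  -- normalized forms of the generators
  have hfn : ∀ z, f z = a * (z - p) + p := by
    intro z; rw [hf, hb]; ring
  have hgn : ∀ z, g z = c * (z - p) + p + δ * (1 - c) := by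
    intro z; rw [hg, hd, hδdef]; ring
  -- membership helpers
  have hfC : f ∈ C := Subsemigroup.subset_closure (by simp)
  have hgC : g ∈ C := Subsemigroup.subset_closure (by simp)
  have hmulpow : ∀ x : Function.End ℝ, x ∈ C → ∀ y : Function.End ℝ, y ∈ C →
      ∀ k : ℕ, x * y ^ k ∈ C := by
    intro x hx y hy k
    induction k with
    | zero => simpa using hx
    | succ i ih =>
        have : x * y ^ (i + 1) = x * y ^ i * y := by rw [pow_succ, mul_assoc]
        rw [this]
        exact mul_mem ih hy
  have hpowC : ∀ x : Function.End ℝ, x ∈ C → ∀ k : ℕ, 1 ≤ k → x ^ k ∈ C := by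
    intro x hx k hk
    obtain ⟨i, rfl⟩ : ∃ i, k = i + 1 := ⟨k - 1, by omega⟩
    rw [pow_succ']
    exact hmulpow x hx x hx i
  -- power formulas
  have happly : ∀ (h₁ h₂ : Function.End ℝ) z, (h₁ * h₂) z = h₁ (h₂ z) := fun _ _ _ => rfl
  have hfpow : ∀ n : ℕ, ∀ z, (f ^ n) z = a ^ n * (z - p) + p := by
    intro n
    induction n with
    | zero => intro z; simp [Function.End.one_def]
    | succ i ih =>
        intro z
        rw [pow_succ', happly, hfn, ih]
        ring
  have hgpow : ∀ m : ℕ, ∀ z, (g ^ m) z = c ^ m * (z - p) + p + δ * (1 - c ^ m) := by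
    intro m
    induction m with
    | zero => intro z; simp [Function.End.one_def]
    | succ i ih =>
        intro z
        rw [pow_succ', happly, ih, hgn]
        ring
  ---------------------------------------------------------------------------
  -- quantitative setup
  obtain ⟨s, hsdef⟩ : ∃ x : ℝ, x = t - δ := ⟨_, rfl⟩
  have hs : 0 ≤ s := by rw [hsdef]; linarith only [ht]
  obtain ⟨εp, hεp⟩ : ∃ x : ℝ, x = ε / (2 * (|p| + 1)) := ⟨_, rfl⟩
  have hppos : 0 < |p| + 1 := by positivity
  have hεppos : 0 < εp := by rw [hεp]; positivity
  obtain ⟨εl, hεl⟩ : ∃ x : ℝ, x = min 1 εp := ⟨_, rfl⟩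
  have hεlpos : 0 < εl := by rw [hεl]; exact lt_min one_pos hεppos
  have hεl1 : εl ≤ 1 := by rw [hεl]; exact min_le_left _ _
  have hεlεp : εl ≤ εp := by rw [hεl]; exact min_le_right _ _
  -- choose M₀ with c^M₀ small
  obtain ⟨ε₀, hε₀⟩ : ∃ x : ℝ, x = ε / (8 * (δ + 1)) := ⟨_, rfl⟩
  have hε₀pos : 0 < ε₀ := by rw [hε₀]; positivity
  obtain ⟨M₁, hM₁⟩ := exists_pow_lt_of_lt_one hε₀pos hc1
  obtain ⟨M₀, hM₀def⟩ : ∃ x : ℕ, x = max M₁ 1 := ⟨_, rfl⟩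
  have hM₀1 : 1 ≤ M₀ := by rw [hM₀def]; exact le_max_right _ _
  have hcM₀ : c ^ M₀ < ε₀ := by
    calc c ^ M₀ ≤ c ^ M₁ := pow_le_pow_of_le_one hc.le hc1.le (by rw [hM₀def]; exact le_max_left _ _)
      _ < ε₀ := hM₁
  -- first word : c^m * a^n close to 1, m ≥ M₀
  obtain ⟨m, n, hmM₀, hmn⟩ := aux_lemU a c hc hc1 ha M₀ hM₀1 (εl/3) (by positivity)
  have hm1 : 1 ≤ m := le_trans hM₀1 hmM₀
  have hcmpos : 0 < c ^ m := pow_pos hc m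
  have hcmsmall : c ^ m < ε₀ := by
    calc c ^ m ≤ c ^ M₀ := pow_le_pow_of_le_one hc.le hc1.le hmM₀
      _ < ε₀ := hcM₀
  have hδcm : δ * c ^ m < ε / 8 := by
    have h1 : δ * c ^ m < δ * ε₀ := mul_lt_mul_of_pos_left hcmsmall hδ
    have h2 : δ * ε₀ ≤ ε / 8 := by
      rw [hε₀, mul_comm, div_mul_eq_mul_div,
        div_le_div_iff₀ (by positivity) (by norm_num : (0:ℝ) < 8)]
      nlinarith [hε.le, hδ.le]
    exact lt_of_lt_of_le h1 h2
  -- a priori bound for N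
  obtain ⟨umin, humin⟩ : ∃ x : ℝ, x = c ^ m * (δ * (1 - c)) := ⟨_, rfl⟩
  have huminpos : 0 < umin := by
    rw [humin]
    apply mul_pos hcmpos
    apply mul_pos hδ
    linarith
  obtain ⟨K, hK⟩ : ∃ x : ℕ, x = ⌊s / umin⌋₊ + 1 := ⟨_, rfl⟩
  -- tolerance for the middle block
  obtain ⟨τ, hτ⟩ : ∃ x : ℝ, x = min (εl/3) ((ε/8) / (s + δ + 1)) := ⟨_, rfl⟩
  have hτpos : 0 < τ := by
    rw [hτ]
    refine lt_min (by positivity) ?_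
    have h1 : (0:ℝ) < s + δ + 1 := by linarith only [hs, hδ]
    positivity
  obtain ⟨η₂, hη₂⟩ : ∃ x : ℝ, x = min 1 (τ / ((K:ℝ) * 2 ^ K + 1)) := ⟨_, rfl⟩
  have hη₂pos : 0 < η₂ := by
    rw [hη₂]
    refine lt_min one_pos ?_
    have h2 : (0:ℝ) < (K:ℝ) * 2 ^ K + 1 := by positivity
    exact div_pos hτpos h2
  have hη₂1 : η₂ ≤ 1 := by rw [hη₂]; exact min_le_left _ _
  have hΦτ : η₂ * ((K:ℝ) * 2 ^ K) ≤ τ := by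
    have h1 : η₂ ≤ τ / ((K:ℝ) * 2 ^ K + 1) := by rw [hη₂]; exact min_le_right _ _
    have h2 : (0:ℝ) ≤ (K:ℝ) * 2 ^ K := by positivity
    calc η₂ * ((K:ℝ) * 2 ^ K) ≤ (τ / ((K:ℝ) * 2 ^ K + 1)) * ((K:ℝ) * 2 ^ K) :=
          mul_le_mul_of_nonneg_right h1 h2
      _ ≤ (τ / ((K:ℝ) * 2 ^ K + 1)) * ((K:ℝ) * 2 ^ K + 1) := by
          apply mul_le_mul_of_nonneg_left (by linarith only []) (by positivity)
      _ = τ := by field_simp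
  obtain ⟨Φ, hΦdef⟩ : ∃ x : ℝ, x = η₂ * ((K:ℝ) * 2 ^ K) := ⟨_, rfl⟩
  have hΦτ' : Φ ≤ τ := by rw [hΦdef]; exact hΦτ
  have hΦpos : 0 ≤ Φ := by
    rw [hΦdef]; positivity
  have hΦεl : Φ ≤ εl/3 := le_trans hΦτ' (by rw [hτ]; exact min_le_left _ _)
  have hΦε8 : Φ ≤ (ε/8) / (s + δ + 1) := le_trans hΦτ' (by rw [hτ]; exact min_le_right _ _)
  -- middle block
  obtain ⟨m', n', hm'1, hm'n'⟩ := aux_lemU a c hc hc1 ha 1 le_rfl η₂ hη₂pos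
  obtain ⟨β, hβdef⟩ : ∃ x : ℝ, x = c ^ m' * a ^ n' := ⟨_, rfl⟩
  have hβpos : 0 < β := by rw [hβdef]; positivity
  have hβnear : |β - 1| < η₂ := by rw [hβdef]; exact hm'n'
  have hβle : β ≤ 1 + η₂ := by
    have := (abs_lt.mp hβnear).2; linarith only [this]
  have hβ2 : β ≤ 2 := by linarith only [hβle, hη₂1]
  obtain ⟨v, hv⟩ : ∃ x : ℝ, x = δ * (1 - c ^ m') := ⟨_, rfl⟩
  have hcm' : c ^ m' ≤ c := by
    calc c ^ m' ≤ c ^ 1 := pow_le_pow_of_le_one hc.le hc1.le hm'1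
      _ = c := pow_one c
  have hcm'pos : 0 < c ^ m' := pow_pos hc m'
  have hvpos : 0 < v := by
    rw [hv]; apply mul_pos hδ; linarith only [hcm', hc1]
  have hvδ : v ≤ δ := by
    rw [hv]
    linarith only [mul_nonneg hδ.le hcm'pos.le]
  obtain ⟨u, hu⟩ : ∃ x : ℝ, x = c ^ m * v := ⟨_, rfl⟩
  have hupos : 0 < u := by rw [hu]; exact mul_pos hcmpos hvpos
  have huδcm : u ≤ δ * c ^ m := by
    rw [hu]
    calc c ^ m * v ≤ c ^ m * δ := mul_le_mul_of_nonneg_left hvδ hcmpos.le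
      _ = δ * c ^ m := mul_comm _ _
  have huumin : umin ≤ u := by
    rw [humin, hu, hv]
    have h1 : δ * (1 - c) ≤ δ * (1 - c ^ m') :=
      mul_le_mul_of_nonneg_left (by linarith only [hcm']) hδ.le
    exact mul_le_mul_of_nonneg_left h1 hcmpos.le
  obtain ⟨N, hN⟩ : ∃ x : ℕ, x = ⌊s / u⌋₊ := ⟨_, rfl⟩
  have hNK : N ≤ K := by
    have h1 : s / u ≤ s / umin := div_le_div_of_nonneg_left hs huminpos huumin
    calc N = ⌊s / u⌋₊ := hN
      _ ≤ ⌊s / umin⌋₊ := Nat.floor_le_floor h1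
      _ ≤ K := by rw [hK]; omega
  have huN : u * N ≤ s := by
    have h1 : (N:ℝ) ≤ s / u := by
      rw [hN]; exact Nat.floor_le (div_nonneg hs hupos.le)
    calc u * N ≤ u * (s/u) := mul_le_mul_of_nonneg_left h1 hupos.le
      _ = s := by field_simp
  have hsuN : s < u * (N:ℝ) + u := by
    have h1 := Nat.lt_floor_add_one (s/u)
    rw [div_lt_iff₀ hupos] at h1
    have h2 : ((⌊s / u⌋₊ : ℝ) + 1) * u = u * (⌊s / u⌋₊ : ℝ) + u := by ring
    rw [h2] at h1
    rw [hN] at *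
    exact_mod_cast h1
  -- geometric sum estimates
  have hβpowle : ∀ i : ℕ, i ≤ K → β ^ i ≤ 2 ^ K := by
    intro i hi
    calc β ^ i ≤ 2 ^ i := pow_le_pow_left₀ hβpos.le hβ2 i
      _ ≤ 2 ^ K := pow_le_pow_right₀ one_le_two hi
  have hgeom : ∀ i : ℕ, i ≤ K → |β ^ i - 1| ≤ Φ := by
    intro i hi
    have hfact : β ^ i - 1 = (∑ j ∈ Finset.range i, β ^ j) * (β - 1) :=
      (geom_sum_mul β i).symm
    rw [hfact, abs_mul]
    have hsum : |∑ j ∈ Finset.range i, β ^ j| ≤ (K:ℝ) * 2 ^ K := by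
      rw [abs_of_nonneg (Finset.sum_nonneg fun j _ => (pow_pos hβpos j).le)]
      have hiK : (i:ℝ) ≤ K := by exact_mod_cast hi
      calc ∑ j ∈ Finset.range i, β ^ j ≤ ∑ _j ∈ Finset.range i, (2:ℝ) ^ K :=
            Finset.sum_le_sum fun j hj =>
              hβpowle j (le_trans (le_of_lt (Finset.mem_range.mp hj)) hi)
        _ = (i:ℝ) * 2 ^ K := by
            rw [Finset.sum_const, Finset.card_range, nsmul_eq_mul]
        _ ≤ (K:ℝ) * 2 ^ K :=
            mul_le_mul_of_nonneg_right hiK (pow_nonneg (by norm_num) K)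
    calc |∑ j ∈ Finset.range i, β ^ j| * |β - 1| ≤ ((K:ℝ) * 2 ^ K) * η₂ := by
          apply mul_le_mul hsum hβnear.le (abs_nonneg _) (by positivity)
      _ = Φ := by rw [hΦdef]; ring
  obtain ⟨S, hSdef⟩ : ∃ x : ℝ, x = ∑ i ∈ Finset.range N, β ^ i := ⟨_, rfl⟩
  have hSN : |S - (N:ℝ)| ≤ (N:ℝ) * Φ := by
    have h1 : S - (N:ℝ) = ∑ i ∈ Finset.range N, (β ^ i - 1) := by
      rw [hSdef, Finset.sum_sub_distrib, Finset.sum_const, Finset.card_range, nsmul_eq_mul,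
        mul_one]
    rw [h1]
    calc |∑ i ∈ Finset.range N, (β ^ i - 1)| ≤ ∑ i ∈ Finset.range N, |β ^ i - 1| :=
          Finset.abs_sum_le_sum_abs _ _
      _ ≤ ∑ _i ∈ Finset.range N, Φ := Finset.sum_le_sum fun i hi =>
          hgeom i (le_trans (le_of_lt (Finset.mem_range.mp hi)) hNK)
      _ = (N:ℝ) * Φ := by rw [Finset.sum_const, Finset.card_range, nsmul_eq_mul]
  -- the word
  set B : Function.End ℝ := g ^ m' * f ^ n' with hBword
  have hB : ∀ z, B z = β * (z - p) + p + v := by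
    intro z
    rw [hBword, happly, hfpow, hgpow, hβdef, hv]
    ring
  have hBC : B ∈ C := hmulpow _ (hpowC g hgC m' hm'1) f hfC n'
  have hBpow : ∀ Nk : ℕ, ∀ z, (B ^ Nk) z
      = β ^ Nk * (z - p) + p + v * (∑ i ∈ Finset.range Nk, β ^ i) := by
    intro Nk
    induction Nk with
    | zero => intro z; simp [Function.End.one_def]
    | succ i ih =>
        intro z
        rw [pow_succ', happly, ih, hB, geom_sum_succ]
        ring
  set W : Function.End ℝ := g ^ m * B ^ N * f ^ n with hWword
  have hWC : W ∈ C := by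
    have h1 : g ^ m * B ^ N ∈ C := hmulpow _ (hpowC g hgC m hm1) B hBC N
    exact hmulpow _ h1 f hfC n
  obtain ⟨lam, hlam⟩ : ∃ x : ℝ, x = (c ^ m * a ^ n) * β ^ N := ⟨_, rfl⟩
  have hW : ∀ z, W z = lam * (z - p) + p + ((c ^ m * v) * S + δ * (1 - c ^ m)) := by
    intro z
    have e1 : W z = (g ^ m) ((B ^ N) ((f ^ n) z)) := rfl
    rw [e1, hfpow, hBpow, hgpow, hlam, hSdef]
    ring
  -- slope bound
  have hE1 := abs_lt.mp hmn
  have hE2 := abs_le.mp (hgeom N hNK)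
  have hE1E2 : |(c ^ m * a ^ n - 1) * (β ^ N - 1)| ≤ (εl/3) * (εl/3) := by
    rw [abs_mul]
    apply mul_le_mul hmn.le (le_trans (hgeom N hNK) hΦεl) (abs_nonneg _) (by positivity)
  have hE1E2' := abs_le.mp hE1E2
  have hsq : (εl/3) * (εl/3) ≤ εl/3 := by nlinarith only [hεlpos, hεl1]
  have hlamid : lam - 1 = (c ^ m * a ^ n - 1) + (β ^ N - 1)
      + (c ^ m * a ^ n - 1) * (β ^ N - 1) := by rw [hlam]; ring
  have hlamεl : |lam - 1| < εl := by
    rw [hlamid, abs_lt]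
    constructor
    · linarith only [hE1.1, hE2.1, hE1E2'.1, hΦεl, hsq]
    · linarith only [hE1.2, hE2.2, hE1E2'.2, hΦεl, hsq]
  have hεpε : εp < ε := by
    rw [hεp, div_lt_iff₀ (by positivity)]
    nlinarith only [abs_nonneg p, hε]
  have hlamε : |lam - 1| < ε := lt_of_lt_of_le hlamεl (le_trans hεlεp hεpε.le)
  -- translation bound
  have hX : |u * (S - (N:ℝ))| ≤ ε/8 := by
    rw [abs_mul, abs_of_pos hupos]
    calc u * |S - (N:ℝ)| ≤ u * ((N:ℝ) * Φ) := mul_le_mul_of_nonneg_left hSN hupos.le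
      _ = (u * (N:ℝ)) * Φ := by ring
      _ ≤ s * Φ := mul_le_mul_of_nonneg_right huN hΦpos
      _ ≤ s * ((ε/8) / (s + δ + 1)) := mul_le_mul_of_nonneg_left hΦε8 hs
      _ = (ε/8) * (s / (s + δ + 1)) := by ring
      _ ≤ (ε/8) * 1 := by
          apply mul_le_mul_of_nonneg_left _ (by positivity)
          exact (div_le_one (by linarith only [hs, hδ])).mpr (by linarith only [hδ])
      _ = ε/8 := mul_one _
  have hXb := abs_le.mp hX
  -- the translation part
  obtain ⟨kap, hkap⟩ : ∃ x : ℝ, x = p * (1 - lam) + ((c ^ m * v) * S + δ * (1 - c ^ m)) := ⟨_, rfl⟩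
  refine ⟨W, hWC, lam, kap, fun z => by rw [hW z, hkap]; ring, hlamε, ?_⟩
  have hlin : (c ^ m * v) * S = u * (S - (N:ℝ)) + u * (N:ℝ) := by rw [hu]; ring
  have hlamb := abs_lt.mp hlamεl
  have hpabs1 : p ≤ |p| := le_abs_self p
  have hpabs2 : -|p| ≤ p := neg_abs_le p
  have hεpeq : εp * (2 * (|p| + 1)) = ε := by
    rw [hεp]; field_simp
  have hplam : |p * (1 - lam)| ≤ |p| * εl := by
    rw [abs_mul, abs_sub_comm 1 lam]
    exact mul_le_mul_of_nonneg_left hlamεl.le (abs_nonneg p)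
  have hplam' := abs_le.mp hplam
  have hplamε : |p| * εl ≤ ε/2 := by
    have h1 : |p| * εl ≤ |p| * εp := mul_le_mul_of_nonneg_left hεlεp (abs_nonneg p)
    nlinarith only [abs_nonneg p, hεppos, mul_nonneg (abs_nonneg p) hεppos.le, hεpeq, h1]
  -- assemble
  rw [hkap, abs_lt]
  constructor
  · linarith only [hXb.1, hsuN, huδcm, hδcm, hplam'.1, hplamε, hlin, huN,
      mul_pos hδ hcmpos, hsdef, hε]
  · linarith only [hXb.2, hsuN, huδcm, hδcm, hplam'.2, hplamε, hlin, huN,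
      mul_pos hδ hcmpos, hsdef, hε]
end

section
/- Let f(z) = az and g(z) = cz + d with 0 < c < 1 < a and d > 0, and suppose ac = 1. Then for all nonnegative integers n and l, the map g^(2n) ∘ (g^n ∘ f^n)^l ∘ f^n equals z ↦ c^n z + l·(d/(1-c))·(1-c^n)·c^(2n) + (d/(1-c))·(1-c^(2n)), which is a contraction with fixed point (d/(1-c))·(l·c^(2n) + c^n + 1). -/
theorem aux_f_iter (a : ℝ) (f : ℝ → ℝ) (hf : ∀ z, f z = a * z) :
    ∀ (n : ℕ) (z : ℝ), f^[n] z = a ^ n * z := by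
  intro n
  induction n with
  | zero => simp
  | succ k ih =>
    intro z
    rw [Function.iterate_succ_apply', ih, hf, pow_succ]; ring

theorem aux_g_iter (c d : ℝ) (hc1 : c < 1) (g : ℝ → ℝ) (hg : ∀ z, g z = c * z + d) :
    ∀ (m : ℕ) (z : ℝ), g^[m] z = c ^ m * z + (d / (1 - c)) * (1 - c ^ m) := by
  have h1 : (1 : ℝ) - c ≠ 0 := by linarith
  intro m
  induction m with
  | zero => simp
  | succ k ih =>
    intro z
    rw [Function.iterate_succ_apply', ih, hg]
    field_simp
    ring

/-- For `f(z) = az`, `g(z) = cz + d` with `0 < c < 1 < a`, `d > 0` and `ac = 1`: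
for all nonnegative integers `n, l`, the map `g^(2n) ∘ (g^n ∘ f^n)^l ∘ f^n` equals
`z ↦ cⁿ z + l·(d/(1-c))·(1-cⁿ)·c^(2n) + (d/(1-c))·(1-c^(2n))`, which is a contraction
with ratio `cⁿ` and fixed point `(d/(1-c))·(l·c^(2n) + cⁿ + 1)`. -/
theorem iterated_composition_formula
    (a c d : ℝ) (hc : 0 < c) (hc1 : c < 1) (ha : 1 < a) (hd : 0 < d) (hac : a * c = 1)
    (f g : ℝ → ℝ) (hf : ∀ z, f z = a * z) (hg : ∀ z, g z = c * z + d) :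
    ∀ (n l : ℕ) (F : ℝ → ℝ), F = g^[2 * n] ∘ (g^[n] ∘ f^[n])^[l] ∘ f^[n] →
      (∀ z, F z = c ^ n * z + (l : ℝ) * (d / (1 - c)) * (1 - c ^ n) * c ^ (2 * n)
          + (d / (1 - c)) * (1 - c ^ (2 * n))) ∧
      (∀ z w, |F z - F w| = c ^ n * |z - w|) ∧
      F ((d / (1 - c)) * ((l : ℝ) * c ^ (2 * n) + c ^ n + 1)) =
        (d / (1 - c)) * ((l : ℝ) * c ^ (2 * n) + c ^ n + 1) := by
  intro n l F hF
  set K := d / (1 - c) with hK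
  have hac_n : a ^ n * c ^ n = 1 := by
    rw [← mul_pow, hac, one_pow]
  have hgf : ∀ z, (g^[n] ∘ f^[n]) z = z + K * (1 - c ^ n) := by
    intro z
    simp only [Function.comp_apply]
    rw [aux_f_iter a f hf, aux_g_iter c d hc1 g hg]
    rw [show c ^ n * (a ^ n * z) = (a ^ n * c ^ n) * z by ring, hac_n, one_mul]
  have hgfl : ∀ (m : ℕ) (z : ℝ), (g^[n] ∘ f^[n])^[m] z = z + (m : ℝ) * (K * (1 - c ^ n)) := by
    intro m
    induction m with
    | zero => simp
    | succ k ih =>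
      intro z
      rw [Function.iterate_succ_apply', ih, hgf]
      push_cast
      ring
  have hFz : ∀ z, F z = c ^ n * z + (l : ℝ) * K * (1 - c ^ n) * c ^ (2 * n)
      + K * (1 - c ^ (2 * n)) := by
    intro z
    rw [hF]
    simp only [Function.comp_apply]
    rw [aux_f_iter a f hf, hgfl l, aux_g_iter c d hc1 g hg]
    rw [two_mul, pow_add]
    rw [show c ^ n * c ^ n * (a ^ n * z + ↑l * (K * (1 - c ^ n)))
      = (a ^ n * c ^ n) * (c ^ n * z) + ↑l * K * (1 - c ^ n) * (c ^ n * c ^ n) by ring, hac_n]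
    ring
  refine ⟨hFz, ?_, ?_⟩
  · intro z w
    rw [hFz, hFz]
    rw [show c ^ n * z + ↑l * K * (1 - c ^ n) * c ^ (2 * n) + K * (1 - c ^ (2 * n))
      - (c ^ n * w + ↑l * K * (1 - c ^ n) * c ^ (2 * n) + K * (1 - c ^ (2 * n)))
      = c ^ n * (z - w) by ring]
    rw [abs_mul, abs_of_pos (pow_pos hc n)]
  · rw [hFz]
    rw [two_mul, pow_add]
    ring
end

section
/- An N-tuple of matrices (A₁,…,A_N) in SL(2,ℝ) is uniformly hyperbolic if and only if the lower spectral radius of the set {A₁,…,A_N}, defined as lim_{n→∞} inf{ ‖A_{i_n}⋯A_{i_1}‖^{1/n} : i_j ∈ {1,…,N} }, is strictly greater than 1. -/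
open Filter Topology

attribute [local instance] Matrix.linftyOpNormedAddCommGroup Matrix.linftyOpNormedRing

/-- An `N`-tuple of matrices is uniformly hyperbolic if there exist `λ > 1` and `C > 0` with
`‖A_{i_n} ⋯ A_{i_0}‖ ≥ C λⁿ` for every sequence of indices and every `n`. -/
def UniformlyHyperbolic {N : ℕ} (A : Fin N → Matrix (Fin 2) (Fin 2) ℝ) : Prop :=
  ∃ lam C : ℝ, 1 < lam ∧ 0 < C ∧ ∀ (i : ℕ → Fin N) (n : ℕ),
    C * lam ^ n ≤ ‖(((List.range (n + 1)).map fun k => A (i k)).reverse).prod‖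

section Aux

/-- The product `A_{i_{n-1}} ⋯ A_{i_0}`. -/
def MatProd {N : ℕ} (A : Fin N → Matrix (Fin 2) (Fin 2) ℝ) (i : ℕ → Fin N) (n : ℕ) :
    Matrix (Fin 2) (Fin 2) ℝ :=
  (((List.range n).map fun k => A (i k)).reverse).prod

lemma MProd_congr {N : ℕ} (A : Fin N → Matrix (Fin 2) (Fin 2) ℝ) {i j : ℕ → Fin N} {n : ℕ}
    (h : ∀ k < n, i k = j k) : MatProd A i n = MatProd A j n := by
  unfold MatProd
  congr 1
  congr 1
  refine List.map_congr_left fun k hk => ?_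
  rw [h k (List.mem_range.1 hk)]

lemma MProd_add {N : ℕ} (A : Fin N → Matrix (Fin 2) (Fin 2) ℝ) (i : ℕ → Fin N) (m n : ℕ) :
    MatProd A i (m + n) = MatProd A (fun k => i (m + k)) n * MatProd A i m := by
  unfold MatProd
  rw [List.range_add, List.map_append, List.reverse_append, List.prod_append, List.map_map]
  rfl

lemma det_MProd {N : ℕ} (A : Fin N → Matrix (Fin 2) (Fin 2) ℝ)
    (hdet : ∀ i, (A i).det = 1) (i : ℕ → Fin N) (n : ℕ) : (MatProd A i n).det = 1 := by
  unfold MatProd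
  rw [show (Matrix.det (((List.range n).map fun k => A (i k)).reverse).prod)
      = Matrix.detMonoidHom ((((List.range n).map fun k => A (i k)).reverse).prod) from rfl,
    map_list_prod]
  refine List.prod_eq_one fun x hx => ?_
  simp only [List.mem_map, List.mem_reverse] at hx
  obtain ⟨M, hM, rfl⟩ := hx
  obtain ⟨k, -, rfl⟩ := hM
  exact hdet _

lemma row_sum_le_norm (M : Matrix (Fin 2) (Fin 2) ℝ) (i : Fin 2) : ∑ j, ‖M i j‖ ≤ ‖M‖ := by
  rw [Matrix.linfty_opNorm_def]
  have h : (∑ j, ‖M i j‖₊) ≤ Finset.univ.sup fun i => ∑ j, ‖M i j‖₊ :=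
    Finset.le_sup (f := fun i => ∑ j, ‖M i j‖₊) (Finset.mem_univ i)
  calc ∑ j, ‖M i j‖ = ((∑ j, ‖M i j‖₊ : NNReal) : ℝ) := by push_cast; rfl
    _ ≤ _ := by exact_mod_cast h

lemma one_le_norm_of_det_eq_one (M : Matrix (Fin 2) (Fin 2) ℝ) (h : M.det = 1) : 1 ≤ ‖M‖ := by
  have h0 := row_sum_le_norm M 0
  have h1 := row_sum_le_norm M 1
  rw [Fin.sum_univ_two] at h0 h1
  have hd : M 0 0 * M 1 1 - M 0 1 * M 1 0 = 1 := by rw [← Matrix.det_fin_two, h]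
  have hn := norm_nonneg M
  simp only [Real.norm_eq_abs] at h0 h1
  have ha := abs_nonneg (M 0 0); have hb := abs_nonneg (M 0 1)
  have hc := abs_nonneg (M 1 0); have hdd := abs_nonneg (M 1 1)
  have e1 : M 0 0 * M 1 1 ≤ |M 0 0| * |M 1 1| := by
    rw [← abs_mul]; exact le_abs_self _
  have e2 : -(M 0 1 * M 1 0) ≤ |M 0 1| * |M 1 0| := by
    rw [← abs_mul]; exact neg_le_abs _
  nlinarith [mul_le_mul h0 h1 (by linarith) hn]

end Aux

/-- An `N`-tuple `(A₁, …, A_N)` in `SL(2, ℝ)` is uniformly hyperbolic iff the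
lower spectral radius `lim_n inf { ‖A_{i_n} ⋯ A_{i_1}‖^{1/n} }` is strictly greater than 1. -/
theorem uniformlyHyperbolic_iff_lowerSpectralRadius_gt_one
    {N : ℕ} (hN : 0 < N) (A : Fin N → Matrix (Fin 2) (Fin 2) ℝ)
    (hdet : ∀ i, (A i).det = 1) :
    UniformlyHyperbolic A ↔
      ∃ r : ℝ, 1 < r ∧
        Tendsto (fun n : ℕ =>
            sInf {x : ℝ | ∃ i : ℕ → Fin N,
              x = ‖(((List.range n).map fun k => A (i k)).reverse).prod‖ ^ ((1 : ℝ) / n)})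
          atTop (𝓝 r) := by
  have i0 : Fin N := ⟨0, hN⟩
  set T : ℕ → Set ℝ := fun n => {x | ∃ i : ℕ → Fin N, x = ‖MatProd A i n‖} with hTdef
  set S : ℕ → Set ℝ := fun n =>
    {x : ℝ | ∃ i : ℕ → Fin N, x = ‖MatProd A i n‖ ^ ((1 : ℝ) / n)} with hSdef
  have hone : ∀ (i : ℕ → Fin N) (n : ℕ), 1 ≤ ‖MatProd A i n‖ := fun i n =>
    one_le_norm_of_det_eq_one _ (det_MProd A hdet i n)
  have Tne : ∀ n, (T n).Nonempty := fun n => ⟨_, fun _ => i0, rfl⟩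
  have Sne : ∀ n, (S n).Nonempty := fun n => ⟨_, fun _ => i0, rfl⟩
  have Tbdd : ∀ n, BddBelow (T n) := fun n =>
    ⟨1, by rintro x ⟨i, rfl⟩; exact hone i n⟩
  set t : ℕ → ℝ := fun n => sInf (T n) with htdef
  have ht1 : ∀ n, 1 ≤ t n := fun n =>
    le_csInf (Tne n) (by rintro x ⟨i, rfl⟩; exact hone i n)
  have ht0 : ∀ n, 0 < t n := fun n => lt_of_lt_of_le one_pos (ht1 n)
  have htle : ∀ (n : ℕ) (i : ℕ → Fin N), t n ≤ ‖MatProd A i n‖ := fun n i =>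
    csInf_le (Tbdd n) ⟨i, rfl⟩
  -- sInf of the rescaled set
  have hS : ∀ n : ℕ, n ≠ 0 → sInf (S n) = t n ^ ((1 : ℝ) / n) := by
    intro n hn
    have Sb0 : ∀ x ∈ S n, (0:ℝ) ≤ x := by
      rintro x ⟨i, rfl⟩
      exact Real.rpow_nonneg (norm_nonneg _) _
    have hs0 : 0 ≤ sInf (S n) := le_csInf (Sne n) Sb0
    refine le_antisymm ?_ ?_
    · -- sInf (S n) ≤ t n ^ (1/n)
      have hpow : sInf (S n) ^ n ≤ t n := by
        refine le_csInf (Tne n) ?_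
        rintro x ⟨i, rfl⟩
        have hle : sInf (S n) ≤ ‖MatProd A i n‖ ^ ((1:ℝ)/n) :=
          csInf_le ⟨0, Sb0⟩ ⟨i, rfl⟩
        calc sInf (S n) ^ n ≤ (‖MatProd A i n‖ ^ ((1:ℝ)/n)) ^ n :=
              pow_le_pow_left₀ hs0 hle n
          _ = ‖MatProd A i n‖ := by
              rw [one_div, Real.rpow_inv_natCast_pow (norm_nonneg _) hn]
      calc sInf (S n) = (sInf (S n) ^ n) ^ ((1:ℝ)/n) := by
            rw [one_div, Real.pow_rpow_inv_natCast hs0 hn]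
        _ ≤ t n ^ ((1:ℝ)/n) :=
            Real.rpow_le_rpow (pow_nonneg hs0 n) hpow (by positivity)
    · refine le_csInf (Sne n) ?_
      rintro x ⟨i, rfl⟩
      exact Real.rpow_le_rpow (le_of_lt (ht0 n)) (htle n i) (by positivity)
  -- submultiplicativity of t
  have tmul : ∀ m n, t (m + n) ≤ t m * t n := by
    intro m n
    have key : ∀ i j : ℕ → Fin N, t (m + n) ≤ ‖MatProd A j n‖ * ‖MatProd A i m‖ := by
      intro i j
      set ij : ℕ → Fin N := fun k => if k < m then i k else j (k - m) with hij
      have hsplit := MProd_add A ij m n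
      have e1 : MatProd A ij m = MatProd A i m :=
        MProd_congr A fun k hk => by simp [hij, hk]
      have e2 : MatProd A (fun k => ij (m + k)) n = MatProd A j n :=
        MProd_congr A fun k _ => by
          simp [hij, Nat.not_lt.2 (Nat.le_add_right m k)]
      calc t (m + n) ≤ ‖MatProd A ij (m + n)‖ := htle _ _
        _ = ‖MatProd A j n * MatProd A i m‖ := by rw [hsplit, e1, e2]
        _ ≤ ‖MatProd A j n‖ * ‖MatProd A i m‖ := norm_mul_le _ _
    have step1 : ∀ i : ℕ → Fin N, t (m + n) ≤ t n * ‖MatProd A i m‖ := by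
      intro i
      have hpos : 0 < ‖MatProd A i m‖ := lt_of_lt_of_le one_pos (hone i m)
      rw [← div_le_iff₀ hpos]
      refine le_csInf (Tne n) ?_
      rintro x ⟨j, rfl⟩
      rw [div_le_iff₀ hpos]
      exact key i j
    have step2 : t (m + n) / t n ≤ t m := by
      refine le_csInf (Tne m) ?_
      rintro x ⟨i, rfl⟩
      rw [div_le_iff₀ (ht0 n)]
      calc t (m + n) ≤ t n * ‖MatProd A i m‖ := step1 i
        _ = ‖MatProd A i m‖ * t n := mul_comm _ _
    rw [div_le_iff₀ (ht0 n)] at step2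
    linarith [step2]
  -- Fekete
  set u : ℕ → ℝ := fun n => Real.log (t n) with hudef
  have usub : Subadditive u := by
    intro m n
    have h1 : t (m + n) ≤ t m * t n := tmul m n
    calc u (m + n) ≤ Real.log (t m * t n) :=
          Real.log_le_log (ht0 _) h1
      _ = u m + u n := Real.log_mul (ht0 m).ne' (ht0 n).ne'
  have hu0 : ∀ n, 0 ≤ u n := fun n => Real.log_nonneg (ht1 n)
  have ubdd : BddBelow (Set.range fun n : ℕ => u n / n) := by
    refine ⟨0, ?_⟩
    rintro x ⟨n, rfl⟩
    exact div_nonneg (hu0 n) (Nat.cast_nonneg n)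
  have hlim := usub.tendsto_lim ubdd
  set L := usub.lim with hLdef
  -- the sequence of infima converges to exp L
  have hmain : Tendsto (fun n : ℕ => sInf (S n)) atTop (𝓝 (Real.exp L)) := by
    have hexp : Tendsto (fun n : ℕ => Real.exp (u n / n)) atTop (𝓝 (Real.exp L)) :=
      (Real.continuous_exp.continuousAt.tendsto).comp hlim
    refine hexp.congr' ?_
    filter_upwards [eventually_ge_atTop 1] with n hn
    have hn0 : n ≠ 0 := by omega
    rw [hS n hn0, Real.rpow_def_of_pos (ht0 n), mul_one_div]
  constructor
  · rintro ⟨lam, C, hlam, hC, hUH⟩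
    have hlow : ∀ n : ℕ, C * lam ^ n ≤ t (n + 1) := by
      intro n
      refine le_csInf (Tne _) ?_
      rintro x ⟨i, rfl⟩
      exact hUH i n
    have hlampos : (0:ℝ) < lam := lt_trans one_pos hlam
    have hulow : ∀ n : ℕ, 1 ≤ n →
        Real.log lam + (Real.log C - Real.log lam) / n ≤ u n / n := by
      intro n hn
      obtain ⟨m, rfl⟩ := Nat.exists_eq_add_of_le hn
      set n := 1 + m
      have hc : (0:ℝ) < (n : ℝ) := by positivity
      have h1 : Real.log C + m * Real.log lam ≤ u n := by
        have h2 : Real.log (C * lam ^ m) ≤ Real.log (t n) :=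
          Real.log_le_log (by positivity) (by simpa [n, Nat.add_comm] using hlow m)
        rwa [Real.log_mul hC.ne' (by positivity), Real.log_pow] at h2
      rw [le_div_iff₀ hc, add_mul, div_mul_cancel₀ _ hc.ne']
      have hcast : (n : ℝ) = (m : ℝ) + 1 := by push_cast [n]; ring
      rw [hcast]
      nlinarith [h1]
    have haux : Tendsto (fun n : ℕ =>
        Real.log lam + (Real.log C - Real.log lam) / n) atTop (𝓝 (Real.log lam)) := by
      have h2 : Tendsto (fun n : ℕ => (Real.log C - Real.log lam) / n) atTop (𝓝 0) :=
        tendsto_const_nhds.div_atTop tendsto_natCast_atTop_atTop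
      simpa using tendsto_const_nhds.add h2
    have hLlam : Real.log lam ≤ L := by
      refine le_of_tendsto_of_tendsto haux hlim ?_
      filter_upwards [eventually_ge_atTop 1] with n hn
      exact hulow n hn
    refine ⟨Real.exp L, ?_, hmain⟩
    calc (1:ℝ) = Real.exp 0 := Real.exp_zero.symm
      _ < Real.exp L := Real.exp_lt_exp.2 (lt_of_lt_of_le (Real.log_pos hlam) hLlam)
  · rintro ⟨r, hr, htend⟩
    set lam : ℝ := (1 + r) / 2 with hlamdef
    have hlam1 : 1 < lam := by simp only [hlamdef]; linarith
    have hlamr : lam < r := by simp only [hlamdef]; linarith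
    have hlampos : (0:ℝ) < lam := lt_trans one_pos hlam1
    have hev : ∀ᶠ n in atTop, lam < sInf (S n) :=
      htend.eventually (eventually_gt_nhds hlamr)
    obtain ⟨n₀, hn₀⟩ := eventually_atTop.1 (hev.and (eventually_ge_atTop 1))
    have hkey : ∀ n, n₀ ≤ n → lam ^ n ≤ t n := by
      intro n hn
      obtain ⟨h1, h2⟩ := hn₀ n hn
      have hn0 : n ≠ 0 := by omega
      rw [hS n hn0] at h1
      calc lam ^ n ≤ (t n ^ ((1:ℝ)/n)) ^ n :=
            pow_le_pow_left₀ hlampos.le h1.le n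
        _ = t n := by rw [one_div, Real.rpow_inv_natCast_pow (ht0 n).le hn0]
    refine ⟨lam, (lam ^ n₀)⁻¹, hlam1, by positivity, ?_⟩
    intro i n
    show (lam ^ n₀)⁻¹ * lam ^ n ≤ ‖MatProd A i (n + 1)‖
    have hClam : (lam ^ n₀)⁻¹ ≤ 1 := by
      rw [inv_le_one_iff₀]
      right
      exact one_le_pow₀ hlam1.le
    by_cases hcase : n₀ ≤ n + 1
    · calc (lam ^ n₀)⁻¹ * lam ^ n ≤ 1 * lam ^ n :=
            mul_le_mul_of_nonneg_right hClam (by positivity)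
        _ = lam ^ n := one_mul _
        _ ≤ lam ^ (n + 1) := pow_le_pow_right₀ hlam1.le (Nat.le_succ n)
        _ ≤ t (n + 1) := hkey (n + 1) hcase
        _ ≤ ‖MatProd A i (n + 1)‖ := htle _ _
    · push_neg at hcase
      have h1 : lam ^ n ≤ lam ^ n₀ := pow_le_pow_right₀ hlam1.le (by omega)
      calc (lam ^ n₀)⁻¹ * lam ^ n ≤ (lam ^ n₀)⁻¹ * lam ^ n₀ :=
            mul_le_mul_of_nonneg_left h1 (by positivity)
        _ = 1 := inv_mul_cancel₀ (by positivity)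
        _ ≤ ‖MatProd A i (n + 1)‖ := hone i (n + 1)
end

section
/- Let F be a finite tuple of Möbius transformations generating a semigroup S, and suppose there is an open interval J in the extended real line mapped compactly inside itself by every generator (i.e., the closure of the image of J under each generator is contained in J). Then S contains no elliptic elements and does not accumulate at the identity; in particular S does not contain the identity. -/
/-!
Let `C ⊆ J` be the union of the closures of the images of `J` under the generators; it is
compact, and by induction every element of the semigroup maps `J` into `C`. A continuous map
sending the interval `J` into a compact subinterval has a fixed point there, and a real Möbius
map with a real fixed point satisfies `|tr| ≥ 2`, so it is not elliptic. A point `w ∈ J \ C`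
is fixed by `±1` but sent into the closed set `C` by every element of the semigroup; since
`g ↦ g • w` is continuous, a whole neighbourhood of `±1` misses the semigroup.
-/

open Filter Topology OnePoint

local notation "SL2" => Matrix.SpecialLinearGroup (Fin 2) ℝ

instance : Fact (Even (Fintype.card (Fin 2))) := ⟨by simp⟩

/-- The action of an element of `SL(2, ℝ)` on the Riemann sphere by Möbius transformation. -/
noncomputable def mobiusExt (g : SL2) : OnePoint ℂ → OnePoint ℂ :=
  fun p => Option.elim (p : Option ℂ)
    (if (g 1 0 : ℝ) = 0 then (∞ : OnePoint ℂ) else (((g 0 0 / g 1 0 : ℝ) : ℂ) : OnePoint ℂ))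
    (fun z => if ((g 1 0 : ℝ) : ℂ) * z + ((g 1 1 : ℝ) : ℂ) = 0 then (∞ : OnePoint ℂ)
      else (((((g 0 0 : ℝ) : ℂ) * z + ((g 0 1 : ℝ) : ℂ)) /
            (((g 1 0 : ℝ) : ℂ) * z + ((g 1 1 : ℝ) : ℂ))) : OnePoint ℂ))

/-- Membership in the extended real line `ℝ ∪ {∞}` inside the Riemann sphere. -/
def inExtReal (p : OnePoint ℂ) : Prop := p = ∞ ∨ ∃ r : ℝ, p = ((r : ℂ) : OnePoint ℂ)

/-- The forward limit set of a set `S` of elements of `SL(2, ℝ)`: the accumulation points,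
on the extended real line, of the orbit of the point `i` under the corresponding Möbius
transformations. -/
def limitSet (S : Set SL2) : Set (OnePoint ℂ) :=
  {p | inExtReal p ∧
    AccPt p (𝓟 ((fun g => mobiusExt g ((Complex.I : ℂ) : OnePoint ℂ)) '' S))}

instance : TopologicalSpace SL2 :=
  show TopologicalSpace {A : Matrix (Fin 2) (Fin 2) ℝ // A.det = 1} from inferInstance

section MobiusReal

variable (g h : SL2) (t : ℝ)

def mobiusDen : ℝ := g 1 0 * t + g 1 1

-- At a pole, `mobiusDen g t = 0`, this is the junk value `0` where `mobiusExt` gives `∞`.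
noncomputable def mobiusReal : ℝ := (g 0 0 * t + g 0 1) / mobiusDen g t

theorem mobiusExt_ofReal :
    mobiusExt g ((t : ℂ) : OnePoint ℂ) =
      if mobiusDen g t = 0 then ∞ else ((mobiusReal g t : ℂ) : OnePoint ℂ) := by
  change (if _ then _ else _) = _
  simp only [mobiusReal, mobiusDen]
  norm_cast

variable {g t} in
theorem mobiusExt_ofReal_of_mobiusDen_ne_zero (ht : mobiusDen g t ≠ 0) :
    mobiusExt g ((t : ℂ) : OnePoint ℂ) = ((mobiusReal g t : ℂ) : OnePoint ℂ) := by
  rw [mobiusExt_ofReal, if_neg ht]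

variable {g t} in
theorem mobiusDen_ne_zero_of_mobiusExt_ne_infty (ht : mobiusExt g ((t : ℂ) : OnePoint ℂ) ≠ ∞) :
    mobiusDen g t ≠ 0 := fun h0 => ht (by rw [mobiusExt_ofReal, if_pos h0])

theorem mobiusDen_mul (ht : mobiusDen h t ≠ 0) :
    mobiusDen (g * h) t = mobiusDen g (mobiusReal h t) * mobiusDen h t := by
  simp only [mobiusReal, mobiusDen, Matrix.SpecialLinearGroup.coe_mul, Matrix.mul_apply,
    Fin.sum_univ_two] at *
  field_simp
  ring

theorem mobiusReal_mul (ht : mobiusDen h t ≠ 0) :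
    mobiusReal (g * h) t = mobiusReal g (mobiusReal h t) := by
  rw [mobiusReal, mobiusDen_mul g h t ht, mobiusReal, mobiusReal]
  simp only [mobiusDen, Matrix.SpecialLinearGroup.coe_mul, Matrix.mul_apply,
    Fin.sum_univ_two] at *
  field_simp
  ring

theorem mobiusDen_neg : mobiusDen (-g) t = -mobiusDen g t := by
  simp only [mobiusDen, Matrix.SpecialLinearGroup.coe_neg, Matrix.neg_apply, neg_mul, neg_add]

theorem mobiusReal_neg : mobiusReal (-g) t = mobiusReal g t := by
  simp only [mobiusReal, mobiusDen_neg, Matrix.SpecialLinearGroup.coe_neg, Matrix.neg_apply,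
    neg_mul, ← neg_add, neg_div_neg_eq]

theorem mobiusDen_one : mobiusDen 1 t = 1 := by
  simp [mobiusDen]

theorem mobiusReal_one : mobiusReal 1 t = t := by
  simp [mobiusReal, mobiusDen_one]

-- A fixed point solves `c t² + (d - a) t - b = 0`, whose discriminant is `tr² - 4`.
variable {g t} in
theorem two_le_abs_trace_of_isFixedPt (hd : mobiusDen g t ≠ 0)
    (hfix : Function.IsFixedPt (mobiusReal g) t) :
    2 ≤ |(g : Matrix (Fin 2) (Fin 2) ℝ).trace| := by
  have hdet : g 0 0 * g 1 1 - g 0 1 * g 1 0 = 1 := by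
    rw [← Matrix.det_fin_two]; exact g.2
  have hquad : g 0 0 * t + g 0 1 = t * mobiusDen g t := (div_eq_iff hd).mp hfix
  have hdisc : (2 * g 1 0 * t + (g 1 1 - g 0 0)) ^ 2 = (g 0 0 + g 1 1) ^ 2 - 4 := by
    simp only [mobiusDen] at hquad
    linear_combination (-4 * g 1 0) * hquad - 4 * hdet
  rw [Matrix.trace_fin_two, ← abs_two, ← sq_le_sq]
  nlinarith [sq_nonneg (2 * g 1 0 * t + (g 1 1 - g 0 0))]

theorem continuous_coe_matrix : Continuous (fun g : SL2 => (g : Matrix (Fin 2) (Fin 2) ℝ)) :=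
  continuous_subtype_val

variable {t} in
theorem continuousAt_mobiusReal_left {x : SL2} (hx : mobiusDen x t ≠ 0) :
    ContinuousAt (fun g => mobiusReal g t) x := by
  have hentry (i j : Fin 2) : Continuous (fun g : SL2 => g i j) :=
    (continuous_apply_apply i j).comp continuous_coe_matrix
  unfold mobiusReal mobiusDen
  exact (((hentry 0 0).mul continuous_const).add (hentry 0 1)).continuousAt.div
    (((hentry 1 0).mul continuous_const).add (hentry 1 1)).continuousAt hx

variable {g} in
theorem continuousOn_mobiusReal {I : Set ℝ} (hI : ∀ t ∈ I, mobiusDen g t ≠ 0) :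
    ContinuousOn (mobiusReal g) I := by
  unfold mobiusReal mobiusDen
  exact ((continuous_const.mul continuous_id).add continuous_const).continuousOn.div
    ((continuous_const.mul continuous_id).add continuous_const).continuousOn hI

end MobiusReal

theorem exists_isFixedPt_of_mapsTo_isCompact {α : Type*} [ConditionallyCompleteLinearOrder α]
    [TopologicalSpace α] [OrderTopology α] [DenselyOrdered α] {I C : Set α} {f : α → α}
    (hI : I.OrdConnected) (hIne : I.Nonempty) (hC : IsCompact C) (hCI : C ⊆ I)
    (hf : ContinuousOn f I) (hmaps : Set.MapsTo f I C) : ∃ c ∈ C, Function.IsFixedPt f c := by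
  have hCne : C.Nonempty := hIne.image f |>.mono hmaps.image_subset
  have hIcc : Set.Icc (sInf C) (sSup C) ⊆ I :=
    hI.out (hCI (hC.sInf_mem hCne)) (hCI (hC.sSup_mem hCne))
  have hCIcc : C ⊆ Set.Icc (sInf C) (sSup C) := subset_Icc_csInf_csSup hC.bddBelow hC.bddAbove
  obtain ⟨c, hc, hfix⟩ := exists_mem_Icc_isFixedPt_of_mapsTo (hf.mono hIcc)
    (csInf_le_csSup hCne hC.bddBelow hC.bddAbove) ((hmaps.mono_left hIcc).mono_right hCIcc)
  exact ⟨c, hfix ▸ hmaps (hIcc hc), hfix⟩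

theorem exists_mem_Ioo_notMem_of_isClosed {u v : ℝ} (huv : u < v) {C : Set ℝ} (hC : IsClosed C)
    (hCI : C ⊆ Set.Ioo u v) : ∃ w ∈ Set.Ioo u v, w ∉ C := by
  by_contra! hIC
  have hvC : v ∈ C := hC.closure_subset_iff.2 hIC (closure_Ioo huv.ne ▸ Set.right_mem_Icc.2 huv.le)
  exact (hCI hvC).2.false

def MobiusMapsTo (g : SL2) (I C : Set ℝ) : Prop :=
  ∀ t ∈ I, mobiusDen g t ≠ 0 ∧ mobiusReal g t ∈ C

theorem MobiusMapsTo.mul {g h : SL2} {I C : Set ℝ} (hCI : C ⊆ I) (hg : MobiusMapsTo g I C)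
    (hh : MobiusMapsTo h I C) : MobiusMapsTo (g * h) I C := by
  intro t ht
  obtain ⟨hdh, hht⟩ := hh t ht
  obtain ⟨hdg, hgt⟩ := hg _ (hCI hht)
  rw [mobiusDen_mul g h t hdh, mobiusReal_mul g h t hdh]
  exact ⟨mul_ne_zero hdg hdh, hgt⟩

def mobiusMapsToSubsemigroup (I C : Set ℝ) (hCI : C ⊆ I) : Subsemigroup SL2 where
  carrier := {g | MobiusMapsTo g I C}
  mul_mem' := MobiusMapsTo.mul hCI

theorem MobiusMapsTo.two_le_abs_trace {g : SL2} {I C : Set ℝ} (hI : I.OrdConnected)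
    (hIne : I.Nonempty) (hC : IsCompact C) (hCI : C ⊆ I) (hg : MobiusMapsTo g I C) :
    2 ≤ |(g : Matrix (Fin 2) (Fin 2) ℝ).trace| := by
  obtain ⟨c, hc, hfix⟩ := exists_isFixedPt_of_mapsTo_isCompact hI hIne hC hCI
    (continuousOn_mobiusReal fun t ht => (hg t ht).1) fun t ht => (hg t ht).2
  exact two_le_abs_trace_of_isFixedPt (hg c (hCI hc)).1 hfix

theorem notMem_closure_of_mobiusMapsTo {S : Set SL2} {I C : Set ℝ}
    (hS : ∀ g ∈ S, MobiusMapsTo g I C) (hC : IsClosed C) {w : ℝ} (hw : w ∈ I) (hwC : w ∉ C)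
    {x : SL2} (hx : mobiusDen x w ≠ 0) (hxw : mobiusReal x w = w) : x ∉ closure S := by
  have hU : (fun g => mobiusReal g w) ⁻¹' Cᶜ ∈ 𝓝 x :=
    (continuousAt_mobiusReal_left hx).preimage_mem_nhds (by rw [hxw]; exact hC.isOpen_compl.mem_nhds hwC)
  intro hxS
  obtain ⟨g, hgU, hgS⟩ := mem_closure_iff_nhds.1 hxS _ hU
  exact hgU (hS g hgS w hw).2

theorem exists_isCompact_mobiusMapsTo {ι : Type*} [Finite ι] (A : ι → SL2) {I : Set ℝ}
    (hI : Bornology.IsBounded I)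
    (hmaps : ∀ i, closure (mobiusExt (A i) '' ((fun r : ℝ => ((r : ℂ) : OnePoint ℂ)) '' I)) ⊆
      (fun r : ℝ => ((r : ℂ) : OnePoint ℂ)) '' I) :
    ∃ C ⊆ I, IsCompact C ∧ ∀ i, MobiusMapsTo (A i) I C := by
  set ψ : ℝ → OnePoint ℂ := fun r => ((r : ℂ) : OnePoint ℂ)
  have hψ : Continuous ψ := OnePoint.continuous_coe.comp Complex.continuous_ofReal
  have hψinj : ψ.Injective := OnePoint.coe_injective.comp Complex.ofReal_injective
  set C := ⋃ i, ψ ⁻¹' closure (mobiusExt (A i) '' (ψ '' I))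
  have hCI : C ⊆ I := Set.iUnion_subset fun i =>
    (Set.preimage_mono (hmaps i)).trans (Set.preimage_image_eq I hψinj).subset
  refine ⟨C, hCI, Metric.isCompact_of_isClosed_isBounded
    (isClosed_iUnion_of_finite fun i => isClosed_closure.preimage hψ) (hI.subset hCI),
    fun i t ht => ?_⟩
  have himg : mobiusExt (A i) (ψ t) ∈ closure (mobiusExt (A i) '' (ψ '' I)) :=
    subset_closure ⟨ψ t, ⟨t, ht, rfl⟩, rfl⟩
  have hd : mobiusDen (A i) t ≠ 0 := mobiusDen_ne_zero_of_mobiusExt_ne_infty fun h => by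
    obtain ⟨r, -, hr⟩ := hmaps i himg
    exact OnePoint.coe_ne_infty _ (hr.trans h)
  refine ⟨hd, Set.mem_iUnion.2 ⟨i, ?_⟩⟩
  rwa [Set.mem_preimage, show ψ (mobiusReal (A i) t) = mobiusExt (A i) (ψ t) from
    (mobiusExt_ofReal_of_mobiusDen_ne_zero hd).symm]

/-- Let `F = (A₁, …, A_N)` be a tuple of Möbius transformations generating a
semigroup `S`, and suppose there is an open interval `J` of the extended real line mapped
compactly inside itself by every generator (the closure of the image of `J` under each
generator is contained in `J`). Then `S` contains no elliptic elements, does not accumulate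
at the identity, and in particular does not contain the identity (which, in `SL(2, ℝ)`, is
represented by `±1`). -/
theorem no_elliptics_and_no_accumulation_at_identity
    (N : ℕ) (A : Fin N → SL2) (u v : ℝ) (huv : u < v)
    (J : Set (OnePoint ℂ)) (hJ : J = (fun r : ℝ => ((r : ℂ) : OnePoint ℂ)) '' Set.Ioo u v)
    (hmaps : ∀ i, closure (mobiusExt (A i) '' J) ⊆ J) :
    (∀ g ∈ Subsemigroup.closure (Set.range A),
        ¬ |Matrix.trace (g : Matrix (Fin 2) (Fin 2) ℝ)| < 2) ∧
    ¬ AccPt (1 : SL2) (𝓟 (Subsemigroup.closure (Set.range A) : Set SL2)) ∧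
    ¬ AccPt (-1 : SL2) (𝓟 (Subsemigroup.closure (Set.range A) : Set SL2)) ∧
    (1 : SL2) ∉ Subsemigroup.closure (Set.range A) ∧
    (-1 : SL2) ∉ Subsemigroup.closure (Set.range A) := by
  subst hJ
  obtain ⟨C, hCI, hC, hgen⟩ := exists_isCompact_mobiusMapsTo A (Metric.isBounded_Ioo u v) hmaps
  have hS : ∀ g ∈ Subsemigroup.closure (Set.range A), MobiusMapsTo g (Set.Ioo u v) C :=
    Subsemigroup.closure_le (S := mobiusMapsToSubsemigroup _ _ hCI).2
      (Set.range_subset_iff.2 hgen)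
  obtain ⟨w, hw, hwC⟩ := exists_mem_Ioo_notMem_of_isClosed huv hC.isClosed hCI
  have h1 := notMem_closure_of_mobiusMapsTo hS hC.isClosed hw hwC
    (by rw [mobiusDen_one]; exact one_ne_zero) (mobiusReal_one w)
  have hneg1 := notMem_closure_of_mobiusMapsTo hS hC.isClosed hw hwC
    (by rw [mobiusDen_neg, mobiusDen_one]; exact neg_ne_zero.2 one_ne_zero)
    (by rw [mobiusReal_neg, mobiusReal_one])
  refine ⟨fun g hg => not_lt.2 ((hS g hg).two_le_abs_trace Set.ordConnected_Ioo
      (Set.nonempty_Ioo.2 huv) hC hCI),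
    fun h => h1 (mem_closure_iff_clusterPt.2 h.clusterPt),
    fun h => hneg1 (mem_closure_iff_clusterPt.2 h.clusterPt),
    fun h => h1 (subset_closure h), fun h => hneg1 (subset_closure h)⟩
end

section
/- Let f(z) = az and g(z) = cz + d with 0 < c < 1 < a, d > 0, and suppose a^n c^m ≠ 1 for all positive integers m, n (i.e., log a / log(1/c) is irrational or the multiplicative semigroup generated by a and c misses 1). Then the set {a^n c^m : m, n ∈ ℕ} accumulates at every point of (0,1); consequently, for every λ ∈ (0,1) there are sequences m_k, n_k with g^{m_k} ∘ f^{n_k} converging to the map z ↦ λz + d/(1−c), whose fixed point d/((1−c)(1−λ)) lies in the forward limit set of ⟨f,g⟩. -/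
/-!
Write `aⁿ cᵐ = exp (n log a - m log c⁻¹)`. The hypothesis says exactly that `log a / log c⁻¹`
is irrational, so the multiples of `log a` are dense in the circle `ℝ ⧸ (log c⁻¹) ℤ`, and along
a subsequence `nₖ → ∞` they converge there to `log λ`; lifting back gives `a^nₖ c^mₖ → λ` with
`mₖ → ∞` as well.

The maps `hₖ = g^mₖ ∘ f^nₖ` are affine, `z ↦ Aₖ z + Bₖ` with real `Aₖ → λ` and
`Bₖ → d/(1-c)`. Hence the diagonal iterates `hₖ^(k+1) i` tend to the limit `d/((1-c)(1-λ))` of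
the fixed points of the `hₖ`, and they never equal it since `Im (hₖ^j i) = Aₖʲ > 0`.
-/

open Filter Topology OnePoint

theorem irrational_div_of_nat_mul_ne {α β : ℝ} (hα : 0 < α) (hβ : 0 < β)
    (h : ∀ m n : ℕ, 0 < m → 0 < n → (n : ℝ) * α ≠ m * β) : Irrational (α / β) := by
  rintro ⟨q, hq⟩
  have hq0 : 0 < q := by exact_mod_cast hq ▸ div_pos hα hβ
  have hnum : 0 < q.num := Rat.num_pos.2 hq0
  refine h q.num.natAbs q.den (by omega) q.den_pos ?_
  rw [Nat.cast_natAbs, Int.cast_abs, abs_of_pos (by exact_mod_cast hnum)]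
  rw [Rat.cast_def, eq_div_iff hβ.ne', div_mul_eq_mul_div, div_eq_iff (by positivity)] at hq
  linarith

theorem AddCircle.mapClusterPt_atTop_nsmul_of_irrational {α β : ℝ} [Fact (0 < β)]
    (hirr : Irrational (α / β)) (t : ℝ) :
    MapClusterPt (t : AddCircle β) atTop (fun n : ℕ => n • (α : AddCircle β)) := by
  rw [mapClusterPt_atTop_nsmul_iff_mem_topologicalClosure_zmultiples, ← SetLike.mem_coe,
    AddSubgroup.topologicalClosure_coe, AddSubgroup.coe_zmultiples]
  exact AddCircle.denseRange_zsmul_coe_iff.2 hirr t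

theorem exists_tendsto_nat_mul_sub_nat_mul {α β : ℝ} (hα : 0 < α) (hβ : 0 < β)
    (hirr : Irrational (α / β)) (t : ℝ) :
    ∃ n m : ℕ → ℕ, Tendsto n atTop atTop ∧ Tendsto m atTop atTop ∧
      Tendsto (fun k => (n k : ℝ) * α - m k * β) atTop (𝓝 t) := by
  have : Fact (0 < β) := ⟨hβ⟩
  obtain ⟨n, hn_mono, hn_lim⟩ :=
    (AddCircle.mapClusterPt_atTop_nsmul_of_irrational hirr t).tendsto_subseq
  set r : ℕ → ℝ := fun k => n k * α - t
  set m : ℕ → ℤ := fun k => round (β⁻¹ * r k)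
  have hnear : Tendsto (fun k => r k - m k * β) atTop (𝓝 0) := by
    refine tendsto_zero_iff_abs_tendsto_zero _ |>.2
      ((tendsto_iff_norm_sub_tendsto_zero.1 hn_lim).congr fun k => ?_)
    simp [r, m, ← AddCircle.norm_eq]
  have hr : Tendsto r atTop atTop := tendsto_atTop_add_const_right _ _
    ((tendsto_natCast_atTop_atTop.comp hn_mono.tendsto_atTop).atTop_mul_const hα)
  have hm : Tendsto (fun k => (m k : ℝ)) atTop atTop := by
    refine ((hr.atTop_add hnear.neg).atTop_div_const hβ).congr fun k => ?_
    field_simp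
    ring
  have hm_nat : ∀ᶠ k in atTop, ((m k).toNat : ℝ) = m k := by
    filter_upwards [hm.eventually_ge_atTop 0] with k hk
    exact_mod_cast Int.toNat_of_nonneg (by exact_mod_cast hk)
  refine ⟨n, fun k => (m k).toNat, hn_mono.tendsto_atTop,
    tendsto_natCast_atTop_iff.1 (hm.congr' (hm_nat.mono fun k hk => hk.symm)), ?_⟩
  rw [← zero_add t]
  refine (hnear.add_const t).congr' (hm_nat.mono fun k hk => ?_)
  simp only [hk, r]
  ring

theorem exists_tendsto_pow_mul_pow {a c : ℝ} (ha : 1 < a) (hc : 0 < c) (hc1 : c < 1)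
    (hno1 : ∀ m n : ℕ, 0 < m → 0 < n → a ^ n * c ^ m ≠ 1) {x : ℝ} (hx : 0 < x) :
    ∃ n m : ℕ → ℕ, Tendsto n atTop atTop ∧ Tendsto m atTop atTop ∧
      Tendsto (fun k => a ^ n k * c ^ m k) atTop (𝓝 x) := by
  have hexp (n m : ℕ) : Real.exp (n * Real.log a - m * Real.log c⁻¹) = a ^ n * c ^ m := by
    rw [Real.exp_sub, Real.exp_nat_mul, Real.exp_nat_mul, Real.exp_log (by positivity),
      Real.exp_log (by positivity), inv_pow, div_inv_eq_mul]
  have hirr : Irrational (Real.log a / Real.log c⁻¹) := by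
    refine irrational_div_of_nat_mul_ne (Real.log_pos ha)
      (Real.log_pos (one_lt_inv_iff₀.2 ⟨hc, hc1⟩)) fun m n hm hn h => hno1 m n hm hn ?_
    rw [← hexp, h, sub_self, Real.exp_zero]
  obtain ⟨n, m, hn, hm, hlim⟩ := exists_tendsto_nat_mul_sub_nat_mul (Real.log_pos ha)
    (Real.log_pos (one_lt_inv_iff₀.2 ⟨hc, hc1⟩)) hirr (Real.log x)
  refine ⟨n, m, hn, hm, ?_⟩
  rw [← Real.exp_log hx]
  simpa only [Function.comp_def, hexp] using (Real.continuous_exp.tendsto _).comp hlim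

theorem iterate_sub_eq_pow_mul {R : Type*} [Ring R] {h : R → R} {A p : R}
    (hh : ∀ z, h z - p = A * (z - p)) (j : ℕ) (z : R) : h^[j] z - p = A ^ j * (z - p) := by
  induction j with
  | zero => simp
  | succ j ih => rw [Function.iterate_succ_apply', hh, ih, pow_succ', mul_assoc]

theorem iterate_affine_apply {K : Type*} [Field K] {h : K → K} {A B : K} (hA : A ≠ 1)
    (hh : ∀ z, h z = A * z + B) (j : ℕ) (z : K) :
    h^[j] z = B / (1 - A) + A ^ j * (z - B / (1 - A)) := by
  have hA' : 1 - A ≠ 0 := sub_ne_zero.2 hA.symm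
  refine eq_add_of_sub_eq' (iterate_sub_eq_pow_mul (fun w => ?_) j z)
  rw [hh]
  field_simp
  ring

theorem iterate_affine_comp_iterate_mul_left {K : Type*} [Field K] {a c d : K} (hc : c ≠ 1)
    {f g : K → K} (hf : ∀ z, f z = a * z) (hg : ∀ z, g z = c * z + d) (m n : ℕ) (z : K) :
    g^[m] (f^[n] z) = a ^ n * c ^ m * z + d / (1 - c) * (1 - c ^ m) := by
  rw [iterate_affine_apply hc hg, funext hf, mul_left_iterate_apply]
  ring

theorem tendsto_pow_of_tendsto_of_norm_lt_one {𝕜 ι : Type*} [NormedDivisionRing 𝕜]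
    {L : Filter ι} {r : ι → 𝕜} {l : 𝕜} (hr : Tendsto r L (𝓝 l)) (hl : ‖l‖ < 1) {e : ι → ℕ}
    (he : Tendsto e L atTop) : Tendsto (fun k => r k ^ e k) L (𝓝 0) := by
  obtain ⟨q, hlq, hq1⟩ := exists_between hl
  refine squeeze_zero_norm' ?_
    ((tendsto_pow_atTop_nhds_zero_of_lt_one ((norm_nonneg l).trans hlq.le) hq1).comp he)
  filter_upwards [hr.norm.eventually (gt_mem_nhds hlq)] with k hk
  rw [norm_pow]
  exact pow_le_pow_left₀ (norm_nonneg _) hk.le _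

theorem tendsto_iterate_apply_of_affine {𝕜 ι : Type*} [NormedField 𝕜] {L : Filter ι}
    {φ : ι → 𝕜 → 𝕜} {A B : ι → 𝕜} (hφ : ∀ k z, φ k z = A k * z + B k) {lam b : 𝕜}
    (hA : Tendsto A L (𝓝 lam)) (hlam : ‖lam‖ < 1) (hB : Tendsto B L (𝓝 b)) {e : ι → ℕ}
    (he : Tendsto e L atTop) (z : 𝕜) :
    Tendsto (fun k => (φ k)^[e k] z) L (𝓝 (b / (1 - lam))) := by
  have hlam1 : lam ≠ 1 := by
    rintro rfl
    simp at hlam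
  have hfix : Tendsto (fun k => B k / (1 - A k)) L (𝓝 (b / (1 - lam))) :=
    hB.div (tendsto_const_nhds.sub hA) (sub_ne_zero.2 hlam1.symm)
  have hlim := hfix.add ((tendsto_pow_of_tendsto_of_norm_lt_one hA hlam he).mul
    (tendsto_const_nhds (x := z) |>.sub hfix))
  rw [zero_mul, add_zero] at hlim
  refine hlim.congr' ?_
  filter_upwards [hA.eventually_ne hlam1] with k hk
  rw [iterate_affine_apply hk (hφ k)]

theorem Subsemigroup.pow_mem {M : Type*} [Monoid M] (S : Subsemigroup M) {x : M} (hx : x ∈ S)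
    {n : ℕ} (hn : n ≠ 0) : x ^ n ∈ S := by
  obtain ⟨n, rfl⟩ := Nat.exists_eq_add_one_of_ne_zero hn
  induction n with
  | zero => simpa using hx
  | succ n ih => exact pow_succ x (n + 1) ▸ mul_mem (ih n.succ_ne_zero) hx

theorem accPt_image_apply_of_tendsto_affine {S : Subsemigroup (Function.End ℂ)}
    {φ : ℕ → Function.End ℂ} (hφS : ∀ᶠ k in atTop, φ k ∈ S) {A B : ℕ → ℝ}
    (hφ : ∀ k z, φ k z = A k * z + B k) {lam b : ℝ} (hA : Tendsto A atTop (𝓝 lam))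
    (hlam : lam ∈ Set.Ioo 0 1) (hB : Tendsto B atTop (𝓝 b)) {z₀ : ℂ} (hz₀ : z₀.im ≠ 0) :
    AccPt ((b / (1 - lam) : ℝ) : ℂ) (𝓟 ((fun h : Function.End ℂ => h z₀) '' S)) := by
  have hlim : Tendsto (fun k => (φ k)^[k + 1] z₀) atTop (𝓝 ((b / (1 - lam) : ℝ) : ℂ)) := by
    push_cast
    refine tendsto_iterate_apply_of_affine hφ hA.ofReal ?_ hB.ofReal (tendsto_add_atTop_nat 1) z₀
    rw [Complex.norm_real, Real.norm_of_nonneg hlam.1.le]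
    exact hlam.2
  rw [accPt_iff_frequently]
  refine hlim.frequently (Eventually.frequently ?_)
  filter_upwards [hφS, hA.eventually (lt_mem_nhds hlam.1)] with k hk hAk
  refine ⟨fun h => ?_, φ k ^ (k + 1), S.pow_mem hk k.succ_ne_zero, rfl⟩
  have him : Function.Semiconj Complex.im (φ k) (A k * ·) := fun z => by simp [hφ]
  have := congrArg Complex.im h
  rw [him.iterate_right, mul_left_iterate_apply, Complex.ofReal_im] at this
  exact mul_ne_zero (pow_ne_zero _ hAk.ne') hz₀ this

theorem accumulation_and_limit_set_points_general
    (a c d : ℝ) (hc : 0 < c) (hc1 : c < 1) (ha : 1 < a)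
    (hno1 : ∀ m n : ℕ, 0 < m → 0 < n → a ^ n * c ^ m ≠ 1)
    (f g : Function.End ℂ)
    (hf : ∀ z, f z = (a : ℂ) * z) (hg : ∀ z, g z = (c : ℂ) * z + (d : ℂ)) :
    (∀ x ∈ Set.Ioo (0 : ℝ) 1, ∀ ε > (0 : ℝ), ∃ m n : ℕ, |a ^ n * c ^ m - x| < ε) ∧
    ∀ lam ∈ Set.Ioo (0 : ℝ) 1, ∃ mk nk : ℕ → ℕ,
      Tendsto (fun k => a ^ (nk k) * c ^ (mk k)) atTop (𝓝 lam) ∧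
      Tendsto (fun k => c ^ (mk k)) atTop (𝓝 0) ∧
      (∀ z : ℂ, Tendsto (fun k => g^[mk k] (f^[nk k] z)) atTop
        (𝓝 ((lam : ℂ) * z + ((d / (1 - c) : ℝ) : ℂ)))) ∧
      (((d / ((1 - c) * (1 - lam)) : ℝ) : ℂ) : OnePoint ℂ) ∈
        {p : OnePoint ℂ | AccPt p (𝓟 ((fun h : Function.End ℂ =>
          ((h Complex.I : ℂ) : OnePoint ℂ)) ''
            (Subsemigroup.closure ({f, g} : Set (Function.End ℂ)) : Set (Function.End ℂ))))} := by
  refine ⟨fun x hx ε hε => ?_, fun lam hlam => ?_⟩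
  · obtain ⟨n, m, -, -, hlim⟩ := exists_tendsto_pow_mul_pow ha hc hc1 hno1 hx.1
    obtain ⟨k, hk⟩ := (hlim.eventually (Metric.ball_mem_nhds x hε)).exists
    exact ⟨m k, n k, hk⟩
  obtain ⟨n, m, hn, hm, hA⟩ := exists_tendsto_pow_mul_pow ha hc hc1 hno1 hlam.1
  have hcm : Tendsto (fun k => c ^ m k) atTop (𝓝 0) :=
    (tendsto_pow_atTop_nhds_zero_of_lt_one hc.le hc1).comp hm
  have hB : Tendsto (fun k => d / (1 - c) * (1 - c ^ m k)) atTop (𝓝 (d / (1 - c))) := by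
    simpa using (tendsto_const_nhds (x := (1 : ℝ)).sub hcm).const_mul (d / (1 - c))
  have hcomp (k : ℕ) (z : ℂ) : g^[m k] (f^[n k] z) =
      ((a ^ n k * c ^ m k : ℝ) : ℂ) * z + ((d / (1 - c) * (1 - c ^ m k) : ℝ) : ℂ) := by
    rw [iterate_affine_comp_iterate_mul_left (by exact_mod_cast hc1.ne) hf hg]
    push_cast
    ring
  refine ⟨m, n, hA, hcm, fun z => ?_, ?_⟩
  · simp only [hcomp]
    exact (hA.ofReal.mul_const z).add hB.ofReal
  · set S := Subsemigroup.closure ({f, g} : Set (Function.End ℂ))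
    have hφS : ∀ᶠ k in atTop, g ^ m k * f ^ n k ∈ S := by
      filter_upwards [hn.eventually_ne_atTop 0, hm.eventually_ne_atTop 0] with k hnk hmk
      exact mul_mem (S.pow_mem (Subsemigroup.subset_closure (by simp)) hmk)
        (S.pow_mem (Subsemigroup.subset_closure (by simp)) hnk)
    have := (accPt_image_apply_of_tendsto_affine (φ := fun k => g ^ m k * f ^ n k) hφS hcomp
      hA hlam hB (z₀ := Complex.I) (by simp)).map OnePoint.continuous_coe.continuousAt
      OnePoint.coe_injective
    rwa [map_principal, Set.image_image, div_div] at this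

/-- Let `f(z) = az`, `g(z) = cz + d` with `0 < c < 1 < a`, `d > 0`, and suppose
`aⁿ cᵐ ≠ 1` for all positive integers `m, n`. Then `{aⁿ cᵐ}` accumulates at every point of
`(0, 1)`; consequently, for every `λ ∈ (0, 1)` there are sequences `m_k, n_k` such that
`g^{m_k} ∘ f^{n_k}` converges to the map `z ↦ λ z + d/(1-c)`, whose fixed point
`d/((1-c)(1-λ))` lies in the forward limit set of `⟨f, g⟩`. -/
theorem accumulation_and_limit_set_points
    (a c d : ℝ) (hc : 0 < c) (hc1 : c < 1) (ha : 1 < a) (hd : 0 < d)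
    (hno1 : ∀ m n : ℕ, 0 < m → 0 < n → a ^ n * c ^ m ≠ 1)
    (f g : Function.End ℂ)
    (hf : ∀ z, f z = (a : ℂ) * z) (hg : ∀ z, g z = (c : ℂ) * z + (d : ℂ)) :
    (∀ x ∈ Set.Ioo (0 : ℝ) 1, ∀ ε > (0 : ℝ), ∃ m n : ℕ, |a ^ n * c ^ m - x| < ε) ∧
    ∀ lam ∈ Set.Ioo (0 : ℝ) 1, ∃ mk nk : ℕ → ℕ,
      Tendsto (fun k => a ^ (nk k) * c ^ (mk k)) atTop (𝓝 lam) ∧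
      Tendsto (fun k => c ^ (mk k)) atTop (𝓝 0) ∧
      (∀ z : ℂ, Tendsto (fun k => g^[mk k] (f^[nk k] z)) atTop
        (𝓝 ((lam : ℂ) * z + ((d / (1 - c) : ℝ) : ℂ)))) ∧
      (((d / ((1 - c) * (1 - lam)) : ℝ) : ℂ) : OnePoint ℂ) ∈
        {p : OnePoint ℂ | AccPt p (𝓟 ((fun h : Function.End ℂ =>
          ((h Complex.I : ℂ) : OnePoint ℂ)) ''
            (Subsemigroup.closure ({f, g} : Set (Function.End ℂ)) : Set (Function.End ℂ))))} :=
  accumulation_and_limit_set_points_general a c d hc hc1 ha hno1 f g hf hg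
end
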